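/- arXiv:1912.04866 — 3 statements merged into one kernel-verified Lean document; each statement's English description precedes it below -/
import Mathlib

section
/- Let K be a field of characteristic zero, R = K[x,y,z], and let a, b, α, β be integers with 1 ≤ α ≤ a−1, 1 ≤ β ≤ b−1, α + 1 = b (so γ = 1, and in particular a ≥ b). Let I_β = (x^a, y^b − x^α z, z^3, x^{a−α} y^{b−β}, y^{b−β} z^2) and set k = ⌊(a+b−β)/2⌋. Then h_{R/I_β}(k) = 3b−3 if a = b and β = 1; h_{R/I_β}(k) = 3b−β if β ≤ a−b; h_{R/I_β}(k) = 3b−β−1 if β = a−b+1 ≥ 2; and h_{R/I_β}(k) = 2a+b−3β+2 if β ≥ a−b+2. -/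
open MvPolynomial

/-- The degree-`i` graded component of `R/I`, i.e. the image in `R/I` of the
space of homogeneous polynomials of degree `i`. -/
noncomputable def grComponent (K : Type*) [Field K]
    (I : Ideal (MvPolynomial (Fin 3) K)) (i : ℕ) :
    Submodule K (MvPolynomial (Fin 3) K ⧸ I) :=
  (MvPolynomial.homogeneousSubmodule (Fin 3) K i).map
    (Ideal.Quotient.mkₐ K I).toLinearMap

/-- The Hilbert function of `R/I`. -/
noncomputable def hilb (K : Type*) [Field K]
    (I : Ideal (MvPolynomial (Fin 3) K)) (i : ℕ) : ℕ :=
  Module.finrank K (grComponent K I i)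

/-- `R/I` has the weak Lefschetz property: there is a linear form `L` such that
for every `i`, multiplication by `L` from `[R/I]_i` to `[R/I]_{i+1}` is
injective or surjective. -/
def hasWLP (K : Type*) [Field K] (I : Ideal (MvPolynomial (Fin 3) K)) : Prop :=
  ∃ L : MvPolynomial (Fin 3) K, L.IsHomogeneous 1 ∧
    ∀ i : ℕ,
      (∀ u ∈ grComponent K I i, ∀ v ∈ grComponent K I i,
          Ideal.Quotient.mk I L * u = Ideal.Quotient.mk I L * v → u = v) ∨
      (∀ w ∈ grComponent K I (i + 1), ∃ u ∈ grComponent K I i,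
          Ideal.Quotient.mk I L * u = w)

/-!
Reducing `y ^ b` to `x ^ α * z` (which keeps the degree, as `α + 1 = b`), every monomial of
degree `k` is zero in `R/I` or equals a standard monomial `x^i y^j z^l`: one with `j < b` that no
monomial generator of `I` divides. Standard monomials are independent modulo `I`: give `x, y, z`
the bidegrees `(1, 0), (0, 1), (-α, b)`, so that `y ^ b - x ^ α * z` is bihomogeneous. Regraded
by bidegree, every element of `I` is supported on bidegrees of multiples of the monomial
generators; standard monomials have pairwise distinct bidegrees, none of that kind. Finally, as
`k < a`, the standard monomials of degree `k` are counted row by row in the exponent of `z`.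
-/

open Finset

section MonomialGrading

variable {σ G K : Type*} [AddCommMonoid G]

theorem support_mapDomain_subset_of_mem_span [CommSemiring K] (ψ : (σ →₀ ℕ) →+ G)
    {T : Set G} (hT : ∀ e, ∀ t ∈ T, ψ e + t ∈ T) {S : Set (MvPolynomial σ K)}
    (hS : ∀ s ∈ S, ↑(AddMonoidAlgebra.mapDomainRingHom K ψ s).coeff.support ⊆ T)
    {f : MvPolynomial σ K} (hf : f ∈ Ideal.span S) :
    ↑(AddMonoidAlgebra.mapDomainRingHom K ψ f).coeff.support ⊆ T := by
  classical
  induction hf using Submodule.span_induction with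
  | mem s hs => exact hS s hs
  | zero => simp
  | add f g _ _ hf hg =>
    rw [map_add, AddMonoidAlgebra.coeff_add]
    exact (coe_subset.mpr Finsupp.support_add).trans (by simpa using And.intro hf hg)
  | smul r f _ hf =>
    intro t ht
    rw [smul_eq_mul, map_mul] at ht
    obtain ⟨u, hu, w, hw, rfl⟩ :=
      mem_add.mp (AddMonoidAlgebra.support_coeff_mul_subset _ _ ht)
    obtain ⟨e, -, rfl⟩ := mem_image.mp (Finsupp.mapDomain_support hu)
    exact hT e w (hf hw)

theorem linearIndependent_mk_monomial [Field K] (ψ : (σ →₀ ℕ) →+ G) {T : Set G}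
    (hT : ∀ e, ∀ t ∈ T, ψ e + t ∈ T) {S : Set (MvPolynomial σ K)}
    (hS : ∀ s ∈ S, ↑(AddMonoidAlgebra.mapDomainRingHom K ψ s).coeff.support ⊆ T)
    {ι : Type*} (v : ι → σ →₀ ℕ) (hinj : Function.Injective (ψ ∘ v)) (hvT : ∀ i, ψ (v i) ∉ T) :
    LinearIndependent K fun i => Ideal.Quotient.mk (Ideal.span S) (monomial (v i) (1 : K)) := by
  classical
  rw [linearIndependent_iff']
  intro s c hsum i hi
  have hf : ∑ j ∈ s, monomial (v j) (c j) ∈ Ideal.span S := by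
    rw [← Ideal.Quotient.eq_zero_iff_mem, ← hsum, map_sum]
    refine sum_congr rfl fun j _ => ?_
    rw [← Ideal.Quotient.mkₐ_eq_mk K, ← map_smul, smul_monomial, smul_eq_mul, mul_one]
  have hcoeff := Finsupp.notMem_support_iff.mp fun h =>
    hvT i (support_mapDomain_subset_of_mem_span ψ hT hS hf h)
  rwa [map_sum, AddMonoidAlgebra.coeff_sum, Finsupp.finsetSum_apply, sum_eq_single_of_mem i hi,
    ← single_eq_monomial, AddMonoidAlgebra.mapDomainRingHom_apply,
    AddMonoidAlgebra.mapDomain_single, AddMonoidAlgebra.coeff_single, Finsupp.single_eq_same]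
      at hcoeff
  intro j _ hji
  rw [← single_eq_monomial, AddMonoidAlgebra.mapDomainRingHom_apply,
    AddMonoidAlgebra.mapDomain_single, AddMonoidAlgebra.coeff_single,
    Finsupp.single_eq_of_ne fun h : ψ (v i) = ψ (v j) => hji (hinj h.symm)]

end MonomialGrading

namespace IBeta

noncomputable def expVec (i j l : ℕ) : Fin 3 →₀ ℕ :=
  Finsupp.single 0 i + Finsupp.single 1 j + Finsupp.single 2 l

@[simp] lemma expVec_apply_zero (i j l : ℕ) : expVec i j l 0 = i := by simp [expVec]
@[simp] lemma expVec_apply_one (i j l : ℕ) : expVec i j l 1 = j := by simp [expVec]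
@[simp] lemma expVec_apply_two (i j l : ℕ) : expVec i j l 2 = l := by simp [expVec]

lemma expVec_eta (e : Fin 3 →₀ ℕ) : expVec (e 0) (e 1) (e 2) = e := by
  ext n; fin_cases n <;> simp

lemma monomial_expVec (K : Type*) [CommSemiring K] (i j l : ℕ) :
    monomial (expVec i j l) (1 : K) = X 0 ^ i * X 1 ^ j * X 2 ^ l := by
  simp [expVec, X_pow_eq_monomial, monomial_mul]

lemma degree_expVec (i j l : ℕ) : (expVec i j l).degree = i + j + l := by
  rw [Finsupp.degree_apply,
    sum_subset (subset_univ _) fun n _ hn => Finsupp.notMem_support_iff.mp hn, Fin.sum_univ_three]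
  simp

def bidegree (b α : ℕ) : (Fin 3 →₀ ℕ) →+ ℤ × ℤ where
  toFun e := ((e 0 : ℤ) - α * e 2, (e 1 : ℤ) + b * e 2)
  map_zero' := by simp
  map_add' e f := by simp only [Finsupp.add_apply, Prod.mk_add_mk]; push_cast; ext <;> ring

lemma bidegree_expVec (b α i j l : ℕ) :
    bidegree b α (expVec i j l) = ((i : ℤ) - α * l, (j : ℤ) + b * l) := by
  simp [bidegree]

lemma exists_of_bidegree_eq {b α i j l : ℕ} {e : Fin 3 →₀ ℕ} (hj : j < b)
    (h : bidegree b α e = bidegree b α (expVec i j l)) :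
    ∃ n, e 2 + n = l ∧ e 1 = j + n * b ∧ e 0 + n * α = i := by
  obtain ⟨h0, h1⟩ := Prod.mk.inj (h.trans (bidegree_expVec b α i j l))
  have hle : e 2 ≤ l := by
    by_contra! hlt
    have : (b : ℤ) * (l + 1) ≤ b * e 2 :=
      mul_le_mul_of_nonneg_left (by exact_mod_cast hlt) (by positivity)
    change (e 1 : ℤ) + b * e 2 = j + b * l at h1
    linarith
  obtain ⟨n, rfl⟩ := Nat.exists_eq_add_of_le hle
  refine ⟨n, rfl, ?_, ?_⟩ <;> zify
  · push_cast at h1; linear_combination h1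
  · push_cast at h0; linear_combination h0

variable (K : Type*) [Field K] (a b α β : ℕ)

def MonomialGenDvd (i j l : ℕ) : Prop :=
  a ≤ i ∨ 3 ≤ l ∨ (a - α ≤ i ∧ b - β ≤ j) ∨ (b - β ≤ j ∧ 2 ≤ l)

instance (i j l : ℕ) : Decidable (MonomialGenDvd a b α β i j l) := by
  unfold MonomialGenDvd; infer_instance

def dvdBidegrees : Set (ℤ × ℤ) :=
  bidegree b α '' {e | MonomialGenDvd a b α β (e 0) (e 1) (e 2)}

lemma bidegree_add_mem_dvdBidegrees (e : Fin 3 →₀ ℕ) {t : ℤ × ℤ}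
    (ht : t ∈ dvdBidegrees a b α β) : bidegree b α e + t ∈ dvdBidegrees a b α β := by
  obtain ⟨e', he', rfl⟩ := ht
  refine ⟨e + e', ?_, map_add _ _ _⟩
  simp only [MonomialGenDvd, Set.mem_ofPred_eq, Finsupp.add_apply] at he' ⊢
  omega

lemma injOn_bidegree : Set.InjOn (bidegree b α) {e | e 1 < b} := by
  intro e (he : e 1 < b) e' (he' : e' 1 < b) h
  rw [← expVec_eta e'] at h ⊢
  obtain ⟨n, h2, h1, h0⟩ := exists_of_bidegree_eq he' h
  obtain rfl : n = 0 := by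
    by_contra hn
    have : b ≤ n * b := Nat.le_mul_of_pos_left b (Nat.pos_of_ne_zero hn)
    omega
  rw [← expVec_eta e]
  congr 1 <;> omega

lemma bidegree_notMem_dvdBidegrees {i j l : ℕ} (hj : j < b)
    (h : ¬ MonomialGenDvd a b α β i j l) :
    bidegree b α (expVec i j l) ∉ dvdBidegrees a b α β := by
  rintro ⟨e, he, heq⟩
  obtain ⟨n, h2, h1, h0⟩ := exists_of_bidegree_eq hj heq
  simp only [MonomialGenDvd, Set.mem_ofPred_eq] at he h
  have hn : n < 3 := by omega
  interval_cases n <;> omega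

noncomputable def idealIβ : Ideal (MvPolynomial (Fin 3) K) :=
  Ideal.span {(X 0 : MvPolynomial (Fin 3) K) ^ a, X 1 ^ b - X 0 ^ α * X 2, X 2 ^ 3,
    X 0 ^ (a - α) * X 1 ^ (b - β), X 1 ^ (b - β) * X 2 ^ 2}

variable {a b α β K}

lemma mapDomain_bidegree_monomial (i j l : ℕ) :
    AddMonoidAlgebra.mapDomainRingHom K (bidegree b α) (X 0 ^ i * X 1 ^ j * X 2 ^ l) =
      AddMonoidAlgebra.single (bidegree b α (expVec i j l)) 1 := by
  rw [← monomial_expVec, ← single_eq_monomial, AddMonoidAlgebra.mapDomainRingHom_apply,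
    AddMonoidAlgebra.mapDomain_single]

lemma support_mapDomain_bidegree_subset {i j l : ℕ} (h : MonomialGenDvd a b α β i j l) :
    ↑(AddMonoidAlgebra.mapDomainRingHom K (bidegree b α)
      (X 0 ^ i * X 1 ^ j * X 2 ^ l)).coeff.support ⊆ dvdBidegrees a b α β := by
  rw [mapDomain_bidegree_monomial, AddMonoidAlgebra.coeff_single]
  refine (coe_subset.mpr Finsupp.support_single_subset).trans ?_
  simpa [dvdBidegrees] using ⟨expVec i j l, by simpa using h, rfl⟩

lemma support_mapDomain_bidegree_gen_subset :
    ∀ s ∈ ({(X 0 : MvPolynomial (Fin 3) K) ^ a, X 1 ^ b - X 0 ^ α * X 2, X 2 ^ 3,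
      X 0 ^ (a - α) * X 1 ^ (b - β), X 1 ^ (b - β) * X 2 ^ 2} : Set _),
    ↑(AddMonoidAlgebra.mapDomainRingHom K (bidegree b α) s).coeff.support ⊆
      dvdBidegrees a b α β := by
  simp only [Set.mem_insert_iff, Set.mem_singleton_iff]
  rintro s (rfl | rfl | rfl | rfl | rfl)
  · simpa using support_mapDomain_bidegree_subset (K := K) (b := b) (α := α) (β := β)
      (i := a) (j := 0) (l := 0) (Or.inl le_rfl)
  · have hy := mapDomain_bidegree_monomial (K := K) (b := b) (α := α) 0 b 0
    have hxz := mapDomain_bidegree_monomial (K := K) (b := b) (α := α) α 0 1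
    simp only [pow_zero, one_mul, mul_one, pow_one, bidegree_expVec] at hy hxz
    rw [map_sub, hy, hxz]
    simp
  · simpa using support_mapDomain_bidegree_subset (K := K) (a := a) (b := b) (α := α) (β := β)
      (i := 0) (j := 0) (l := 3) (by simp [MonomialGenDvd])
  · simpa using support_mapDomain_bidegree_subset (K := K) (a := a) (b := b) (α := α) (β := β)
      (i := a - α) (j := b - β) (l := 0) (by simp [MonomialGenDvd])
  · simpa using support_mapDomain_bidegree_subset (K := K) (a := a) (b := b) (α := α) (β := β)
      (i := 0) (j := b - β) (l := 2) (by simp [MonomialGenDvd])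

variable (a b α β) in
/-- `(j, l)` stands for the standard monomial `x ^ (k - j - l) * y ^ j * z ^ l` of degree `k`. -/
def stdPairs (k : ℕ) : Finset (ℕ × ℕ) :=
  (range b ×ˢ range 3).filter fun p =>
    p.1 + p.2 ≤ k ∧ ¬ MonomialGenDvd a b α β (k - p.1 - p.2) p.1 p.2

variable (K a b α β) in
noncomputable def stdMonomial (k : ℕ) (p : stdPairs a b α β k) :
    MvPolynomial (Fin 3) K ⧸ idealIβ K a b α β :=
  Ideal.Quotient.mk _ (X 0 ^ (k - p.1.1 - p.1.2) * X 1 ^ p.1.1 * X 2 ^ p.1.2)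

lemma linearIndependent_stdMonomial (k : ℕ) : LinearIndependent K (stdMonomial K a b α β k) := by
  set v := fun p : stdPairs a b α β k => expVec (k - p.1.1 - p.1.2) p.1.1 p.1.2
  have hmem (p : stdPairs a b α β k) := mem_filter.mp p.2
  simp only [mem_product, mem_range] at hmem
  have hinj : Function.Injective (bidegree b α ∘ v) := by
    intro p q h
    have hpq := injOn_bidegree b α (by simpa [v] using (hmem p).1.1)
      (by simpa [v] using (hmem q).1.1) h
    have h1 := congrArg (· 1) hpq
    have h2 := congrArg (· 2) hpq
    simp only [v, expVec_apply_one, expVec_apply_two] at h1 h2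
    exact Subtype.ext (Prod.ext h1 h2)
  have := linearIndependent_mk_monomial (bidegree b α) (bidegree_add_mem_dvdBidegrees a b α β)
    (support_mapDomain_bidegree_gen_subset (K := K) (a := a) (β := β)) v hinj
    fun p => bidegree_notMem_dvdBidegrees a b α β (hmem p).1.1 (hmem p).2.2
  simp only [v, monomial_expVec] at this
  exact this

lemma mono_mem_idealIβ {i j l : ℕ} (h : MonomialGenDvd a b α β i j l) :
    X 0 ^ i * X 1 ^ j * X 2 ^ l ∈ idealIβ K a b α β := by
  rcases h with h | h | ⟨h0, h1⟩ | ⟨h1, h2⟩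
  · exact Ideal.mem_of_dvd _ (((pow_dvd_pow _ h).mul_right _).mul_right _)
      (Ideal.subset_span (by simp))
  · exact Ideal.mem_of_dvd _ ((pow_dvd_pow _ h).mul_left _) (Ideal.subset_span (by simp))
  · exact Ideal.mem_of_dvd _ ((mul_dvd_mul (pow_dvd_pow _ h0) (pow_dvd_pow _ h1)).mul_right _)
      (Ideal.subset_span (by simp))
  · exact Ideal.mem_of_dvd _ (mul_dvd_mul ((pow_dvd_pow _ h1).mul_left _) (pow_dvd_pow _ h2))
      (Ideal.subset_span (by simp))

lemma mk_mono_y_pow_add (i j l : ℕ) :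
    Ideal.Quotient.mk (idealIβ K a b α β) (X 0 ^ i * X 1 ^ (j + b) * X 2 ^ l) =
      Ideal.Quotient.mk (idealIβ K a b α β) (X 0 ^ (i + α) * X 1 ^ j * X 2 ^ (l + 1)) := by
  rw [Ideal.Quotient.mk_eq_mk_iff_sub_mem]
  have : (X 0 ^ i * X 1 ^ (j + b) * X 2 ^ l - X 0 ^ (i + α) * X 1 ^ j * X 2 ^ (l + 1) :
      MvPolynomial (Fin 3) K) = (X 1 ^ b - X 0 ^ α * X 2) * (X 0 ^ i * X 1 ^ j * X 2 ^ l) := by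
    ring
  rw [this]
  exact Ideal.mul_mem_right _ _ (Ideal.subset_span (by simp))

lemma mk_mono_mem_span_stdMonomial (hαb : α + 1 = b) {k : ℕ} (j : ℕ) :
    ∀ i l, i + j + l = k →
      Ideal.Quotient.mk (idealIβ K a b α β) (X 0 ^ i * X 1 ^ j * X 2 ^ l) ∈
        Submodule.span K (Set.range (stdMonomial K a b α β k)) := by
  induction j using Nat.strong_induction_on with | _ j ih =>
  intro i l hk
  by_cases hdvd : MonomialGenDvd a b α β i j l
  · rw [Ideal.Quotient.eq_zero_iff_mem.mpr (mono_mem_idealIβ hdvd)]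
    exact zero_mem _
  by_cases hjb : b ≤ j
  · obtain ⟨j, rfl⟩ := Nat.exists_eq_add_of_le' hjb
    rw [mk_mono_y_pow_add]
    exact ih j (by omega) _ _ (by omega)
  obtain rfl : i = k - j - l := by omega
  have hp : (j, l) ∈ stdPairs a b α β k := by
    unfold MonomialGenDvd at hdvd
    simp only [stdPairs, mem_filter, mem_product, mem_range]
    exact ⟨⟨by omega, by omega⟩, by omega, hdvd⟩
  exact Submodule.subset_span ⟨⟨(j, l), hp⟩, rfl⟩

lemma grComponent_eq_span_stdMonomial (hαb : α + 1 = b) (k : ℕ) :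
    grComponent K (idealIβ K a b α β) k =
      Submodule.span K (Set.range (stdMonomial K a b α β k)) := by
  apply le_antisymm
  · rw [grComponent, homogeneousSubmodule_eq_finsupp_supported,
      AddMonoidAlgebra.supported_eq_span_single, Submodule.map_span, Submodule.span_le]
    rintro _ ⟨_, ⟨d, hd, rfl⟩, rfl⟩
    rw [← expVec_eta d, Set.mem_ofPred_eq, degree_expVec] at hd
    have := mk_mono_mem_span_stdMonomial (K := K) (a := a) (β := β) hαb _ _ _ hd
    rwa [← monomial_expVec, expVec_eta, ← single_eq_monomial] at this
  · rw [Submodule.span_le]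
    rintro _ ⟨p, rfl⟩
    refine ⟨_, ?_, rfl⟩
    have hp := (mem_filter.mp p.2).2.1
    rw [← monomial_expVec]
    exact isHomogeneous_monomial _ (by rw [degree_expVec]; omega)

theorem hilb_eq_card_stdPairs (hαb : α + 1 = b) (k : ℕ) :
    hilb K (idealIβ K a b α β) k = #(stdPairs a b α β k) := by
  rw [hilb, grComponent_eq_span_stdMonomial hαb,
    finrank_span_eq_card (linearIndependent_stdMonomial k), Fintype.card_coe]

variable (a b α β) in
def stdRow (k l : ℕ) : Finset ℕ :=
  (range b).filter fun j => j + l ≤ k ∧ ¬ MonomialGenDvd a b α β (k - j - l) j l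

lemma card_stdPairs_eq_sum (k : ℕ) :
    #(stdPairs a b α β k) = ∑ l ∈ range 3, #(stdRow a b α β k l) := by
  simp only [stdPairs, stdRow, card_filter, sum_product_right]

lemma card_stdRow_of_lt_two (hαb : α + 1 = b) {k l : ℕ} (hk : k < a) (hl : l < 2) :
    #(stdRow a b α β k l) = min b (k + 1 - l) - (k + 1 - l - (a - α) - (b - β)) := by
  have hrow :
      stdRow a b α β k l = range (min b (k + 1 - l)) \ Ico (b - β) (k + 1 - l - (a - α)) := by
    ext j
    simp only [stdRow, mem_filter, mem_range, mem_sdiff, mem_Ico]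
    unfold MonomialGenDvd
    omega
  rw [hrow, card_sdiff_of_subset (fun j => by simp only [mem_range, mem_Ico]; omega), card_range,
    Nat.card_Ico]

lemma card_stdRow_two {k : ℕ} (hk : k < a) : #(stdRow a b α β k 2) = min (b - β) (k - 1) := by
  have hrow : stdRow a b α β k 2 = range (min (b - β) (k - 1)) := by
    ext j
    simp only [stdRow, mem_filter, mem_range]
    unfold MonomialGenDvd
    omega
  rw [hrow, card_range]

theorem hilb_idealIβ_of_lt (hαb : α + 1 = b) {k : ℕ} (hk : k < a) :
    hilb K (idealIβ K a b α β) k = (min b (k + 1) - (k + 1 - (a - α) - (b - β))) +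
      (min b k - (k - (a - α) - (b - β))) + min (b - β) (k - 1) := by
  rw [hilb_eq_card_stdPairs hαb, card_stdPairs_eq_sum, sum_range_succ, sum_range_succ,
    sum_range_one, card_stdRow_of_lt_two hαb hk zero_lt_two,
    card_stdRow_of_lt_two hαb hk one_lt_two, card_stdRow_two hk, Nat.sub_zero, Nat.add_sub_cancel]

end IBeta

open IBeta in
theorem stmt_13_general (K : Type*) [Field K] (a b α β : ℕ)
    (hα2 : α ≤ a - 1)
    (hβ1 : 1 ≤ β) (hβ2 : β ≤ b - 1)
    (hαb : α + 1 = b) :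
    let I : Ideal (MvPolynomial (Fin 3) K) := Ideal.span
      {(X 0 : MvPolynomial (Fin 3) K) ^ a, X 1 ^ b - X 0 ^ α * X 2, X 2 ^ 3,
        X 0 ^ (a - α) * X 1 ^ (b - β), X 1 ^ (b - β) * X 2 ^ 2}
    let k : ℕ := (a + b - β) / 2
    ((a = b ∧ β = 1 → (hilb K I k : ℤ) = 3 * b - 3) ∧
     ((β : ℤ) ≤ (a : ℤ) - b → (hilb K I k : ℤ) = 3 * b - β) ∧
     ((β : ℤ) = (a : ℤ) - b + 1 ∧ 2 ≤ β → (hilb K I k : ℤ) = 3 * b - β - 1) ∧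
     ((a : ℤ) - b + 2 ≤ (β : ℤ) → (hilb K I k : ℤ) = 2 * a + b - 3 * β + 2)) := by
  intro I k
  have hk_def : k = (a + b - β) / 2 := rfl
  rw [show I = idealIβ K a b α β from rfl, hilb_idealIβ_of_lt hαb (by omega)]
  refine ⟨?_, ?_, ?_, ?_⟩ <;> intro h <;> omega

theorem stmt_13 (K : Type*) [Field K] [CharZero K] (a b α β : ℕ)
    (hα1 : 1 ≤ α) (hα2 : α ≤ a - 1)
    (hβ1 : 1 ≤ β) (hβ2 : β ≤ b - 1)
    (hαb : α + 1 = b) :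
    let I : Ideal (MvPolynomial (Fin 3) K) := Ideal.span
      {(X 0 : MvPolynomial (Fin 3) K) ^ a, X 1 ^ b - X 0 ^ α * X 2, X 2 ^ 3,
        X 0 ^ (a - α) * X 1 ^ (b - β), X 1 ^ (b - β) * X 2 ^ 2}
    let k : ℕ := (a + b - β) / 2
    ((a = b ∧ β = 1 → (hilb K I k : ℤ) = 3 * b - 3) ∧
     ((β : ℤ) ≤ (a : ℤ) - b → (hilb K I k : ℤ) = 3 * b - β) ∧
     ((β : ℤ) = (a : ℤ) - b + 1 ∧ 2 ≤ β → (hilb K I k : ℤ) = 3 * b - β - 1) ∧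
     ((a : ℤ) - b + 2 ≤ (β : ℤ) → (hilb K I k : ℤ) = 2 * a + b - 3 * β + 2)) :=
  stmt_13_general K a b α β hα2 hβ1 hβ2 hαb
end

section
/- Let K be a field of characteristic zero and S = K[x,z]. Let a ≥ c ≥ 2 be integers and set k = ⌊(a+c−2)/2⌋. Let J = (x^a, x^2 + xz + z^2, z^c, x^{a−1} z, x z^{c−1}) ⊆ S. Then every monomial x^i z^{k+1−i} with 0 ≤ i ≤ k+1 belongs to J; equivalently, the degree-(k+1) graded component of S/J is zero. -/
open MvPolynomial

theorem stmt_18 (K : Type*) [Field K] [CharZero K] (a c : ℕ)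
    (hc : 2 ≤ c) (hac : c ≤ a) :
    ∀ i ≤ (a + c - 2) / 2 + 1,
      (X 0 : MvPolynomial (Fin 2) K) ^ i * X 1 ^ ((a + c - 2) / 2 + 1 - i) ∈
        Ideal.span {(X 0 : MvPolynomial (Fin 2) K) ^ a,
          X 0 ^ 2 + X 0 * X 1 + X 1 ^ 2, X 1 ^ c,
          X 0 ^ (a - 1) * X 1, X 0 * X 1 ^ (c - 1)} := by
  set m := (a + c - 2) / 2 + 1 with hm
  have hcm : c ≤ m := by omega
  intro i
  induction i using Nat.strong_induction_on with
  | _ i ih =>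
    match i with
    | 0 =>
      intro _
      have h3 : (X 1 : MvPolynomial (Fin 2) K) ^ c ∈
          ({(X 0 : MvPolynomial (Fin 2) K) ^ a,
            X 0 ^ 2 + X 0 * X 1 + X 1 ^ 2, X 1 ^ c,
            X 0 ^ (a - 1) * X 1, X 0 * X 1 ^ (c - 1)} :
            Set (MvPolynomial (Fin 2) K)) := by simp
      have e : m - 0 = (m - c) + c := by omega
      rw [e, pow_add, pow_zero, one_mul]
      exact Ideal.mul_mem_left _ _ (Ideal.subset_span h3)
    | 1 =>
      intro _
      have h5 : (X 0 : MvPolynomial (Fin 2) K) * X 1 ^ (c - 1) ∈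
          ({(X 0 : MvPolynomial (Fin 2) K) ^ a,
            X 0 ^ 2 + X 0 * X 1 + X 1 ^ 2, X 1 ^ c,
            X 0 ^ (a - 1) * X 1, X 0 * X 1 ^ (c - 1)} :
            Set (MvPolynomial (Fin 2) K)) := by simp
      have e : m - 1 = (m - c) + (c - 1) := by omega
      have : (X 0 : MvPolynomial (Fin 2) K) ^ 1 * X 1 ^ (m - 1) =
          X 1 ^ (m - c) * (X 0 * X 1 ^ (c - 1)) := by
        rw [e, pow_add]; ring
      rw [this]
      exact Ideal.mul_mem_left _ _ (Ideal.subset_span h5)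
    | (i + 2) =>
      intro hi
      have h1 := ih i (by omega) (by omega)
      have h2 := ih (i + 1) (by omega) (by omega)
      have hq : (X 0 : MvPolynomial (Fin 2) K) ^ 2 + X 0 * X 1 + X 1 ^ 2 ∈
          ({(X 0 : MvPolynomial (Fin 2) K) ^ a,
            X 0 ^ 2 + X 0 * X 1 + X 1 ^ 2, X 1 ^ c,
            X 0 ^ (a - 1) * X 1, X 0 * X 1 ^ (c - 1)} :
            Set (MvPolynomial (Fin 2) K)) := by simp
      have e1 : m - i = (m - (i + 2)) + 2 := by omega
      have e2 : m - (i + 1) = (m - (i + 2)) + 1 := by omega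
      rw [e1] at h1
      rw [e2] at h2
      set j := m - (i + 2) with hj
      have key : (X 0 : MvPolynomial (Fin 2) K) ^ (i + 2) * X 1 ^ j =
          X 0 ^ i * X 1 ^ j * (X 0 ^ 2 + X 0 * X 1 + X 1 ^ 2) -
            (X 0 ^ (i + 1) * X 1 ^ (j + 1) + X 0 ^ i * X 1 ^ (j + 2)) := by
        ring
      rw [key]
      exact sub_mem (Ideal.mul_mem_left _ _ (Ideal.subset_span hq)) (add_mem h2 h1)
end

section
/- Let K be a field of characteristic zero and S = K[x,z]. Let a ≥ 4 be an integer and let J = (x^a, x^3 + 3x^2 z + 2x z^2 + z^3, z^{a−1}, x^{a−1} z, x z^{a−3} + z^{a−2}) ⊆ S. Then every monomial x^i z^{a−1−i} with 0 ≤ i ≤ a−1 belongs to J; equivalently, the degree-(a−1) graded component of S/J is zero. -/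
open MvPolynomial

private lemma key_19 (K : Type*) [Field K] [CharZero K] (b : ℕ) :
    ∀ i ≤ b + 3,
      (X 0 : MvPolynomial (Fin 2) K) ^ i * X 1 ^ (b + 3 - i) ∈
        Ideal.span {(X 0 : MvPolynomial (Fin 2) K) ^ (b + 4),
          X 0 ^ 3 + 3 * X 0 ^ 2 * X 1 + 2 * X 0 * X 1 ^ 2 + X 1 ^ 3,
          X 1 ^ (b + 3), X 0 ^ (b + 3) * X 1,
          X 0 * X 1 ^ (b + 1) + X 1 ^ (b + 2)} := by
  set J : Ideal (MvPolynomial (Fin 2) K) :=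
    Ideal.span {(X 0 : MvPolynomial (Fin 2) K) ^ (b + 4),
      X 0 ^ 3 + 3 * X 0 ^ 2 * X 1 + 2 * X 0 * X 1 ^ 2 + X 1 ^ 3,
      X 1 ^ (b + 3), X 0 ^ (b + 3) * X 1,
      X 0 * X 1 ^ (b + 1) + X 1 ^ (b + 2)} with hJ
  have hg2 : (X 0 ^ 3 + 3 * X 0 ^ 2 * X 1 + 2 * X 0 * X 1 ^ 2 + X 1 ^ 3 :
      MvPolynomial (Fin 2) K) ∈ J :=
    Ideal.subset_span (by simp)
  have hg3 : ((X 1 : MvPolynomial (Fin 2) K) ^ (b + 3)) ∈ J :=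
    Ideal.subset_span (by simp)
  have hg5 : ((X 0 : MvPolynomial (Fin 2) K) * X 1 ^ (b + 1) + X 1 ^ (b + 2)) ∈ J :=
    Ideal.subset_span (by simp)
  have hm1 : (X 0 : MvPolynomial (Fin 2) K) ^ 1 * X 1 ^ (b + 2) ∈ J := by
    have h : (X 0 : MvPolynomial (Fin 2) K) ^ 1 * X 1 ^ (b + 2) =
        X 1 * (X 0 * X 1 ^ (b + 1) + X 1 ^ (b + 2)) - X 1 ^ (b + 3) := by ring
    rw [h]
    exact J.sub_mem (J.mul_mem_left _ hg5) hg3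
  have hm2 : (X 0 : MvPolynomial (Fin 2) K) ^ 2 * X 1 ^ (b + 1) ∈ J := by
    have h : (X 0 : MvPolynomial (Fin 2) K) ^ 2 * X 1 ^ (b + 1) =
        X 0 * (X 0 * X 1 ^ (b + 1) + X 1 ^ (b + 2)) - X 0 ^ 1 * X 1 ^ (b + 2) := by ring
    rw [h]
    exact J.sub_mem (J.mul_mem_left _ hg5) hm1
  intro i
  induction i using Nat.strong_induction_on with
  | _ i IH =>
    rcases i with _ | _ | _ | j
    · intro _
      simpa using hg3
    · intro _
      simpa using hm1
    · intro _
      have : b + 3 - 2 = b + 1 := by omega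
      rw [this]
      exact hm2
    · intro hi
      have hjb : j ≤ b := by omega
      obtain ⟨c, rfl⟩ : ∃ c, b = j + c := ⟨b - j, by omega⟩
      have h2 := IH (j + 2) (by omega) (by omega)
      have h1 := IH (j + 1) (by omega) (by omega)
      have h0 := IH j (by omega) (by omega)
      rw [show j + c + 3 - (j + 2) = c + 1 from by omega] at h2
      rw [show j + c + 3 - (j + 1) = c + 2 from by omega] at h1
      rw [show j + c + 3 - j = c + 3 from by omega] at h0
      rw [show j + c + 3 - (j + 3) = c from by omega]
      have h : (X 0 : MvPolynomial (Fin 2) K) ^ (j + 3) * X 1 ^ c =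
          (X 0 ^ j * X 1 ^ c) *
            (X 0 ^ 3 + 3 * X 0 ^ 2 * X 1 + 2 * X 0 * X 1 ^ 2 + X 1 ^ 3) -
          3 * (X 0 ^ (j + 2) * X 1 ^ (c + 1)) -
          2 * (X 0 ^ (j + 1) * X 1 ^ (c + 2)) -
          X 0 ^ j * X 1 ^ (c + 3) := by ring
      rw [h]
      exact J.sub_mem (J.sub_mem (J.sub_mem (J.mul_mem_left _ hg2)
        (J.mul_mem_left 3 h2)) (J.mul_mem_left 2 h1)) h0

theorem stmt_19 (K : Type*) [Field K] [CharZero K] (a : ℕ)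
    (ha : 4 ≤ a) :
    ∀ i ≤ a - 1,
      (X 0 : MvPolynomial (Fin 2) K) ^ i * X 1 ^ (a - 1 - i) ∈
        Ideal.span {(X 0 : MvPolynomial (Fin 2) K) ^ a,
          X 0 ^ 3 + 3 * X 0 ^ 2 * X 1 + 2 * X 0 * X 1 ^ 2 + X 1 ^ 3,
          X 1 ^ (a - 1), X 0 ^ (a - 1) * X 1,
          X 0 * X 1 ^ (a - 3) + X 1 ^ (a - 2)} := by
  obtain ⟨b, rfl⟩ : ∃ b, a = b + 4 := ⟨a - 4, by omega⟩
  intro i hi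
  have h1 : b + 4 - 1 = b + 3 := by omega
  have h2 : b + 4 - 2 = b + 2 := by omega
  have h3 : b + 4 - 3 = b + 1 := by omega
  rw [h1, h2, h3]
  exact key_19 K b i (by omega)
end
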